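/- arXiv:1705.05510 — 2 statements merged into one kernel-verified Lean document; each statement's English description precedes it below -/
import Mathlib

section
/- Let F : 2^U → 2^V be the map induced by a weighted matching instance (G = (U,V;E), w) in which all matchings have pairwise distinct weights. If U₂ ⊆ U₁ ⊆ U and |F(U₁)| = |U₁| (every vertex of U₁ is matched in the unique maximum-weight matching of G[U₁ ∪ V]), then |F(U₂)| = |U₂| (every vertex of U₂ is matched in the unique maximum-weight matching of G[U₂ ∪ V]). -/
open scoped Classical

/-- `M` is a matching with edges inside the edge set `E`:
no two distinct edges of `M` share a left or a right endpoint. -/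
def IsMatching {U V : Type*} (E M : Finset (U × V)) : Prop :=
  M ⊆ E ∧ ∀ e₁ ∈ M, ∀ e₂ ∈ M, (e₁.1 = e₂.1 ∨ e₁.2 = e₂.2) → e₁ = e₂

/-- The edge set of the subgraph `G[U' ∪ V]` induced by deleting
the left vertices outside `U'` (and their incident edges). -/
noncomputable def restrictL {U V : Type*} (E : Finset (U × V)) (U' : Finset U) : Finset (U × V) :=
  E.filter (fun e => e.1 ∈ U')

/-- The weight of a matching: the sum of the weights of its edges. -/
noncomputable def mWeight {U V : Type*} (w : U × V → ℝ) (M : Finset (U × V)) : ℝ :=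
  ∑ e ∈ M, w e

/-- `M` is a maximum-weight matching of the graph with edge set `E`. -/
def IsMaxMatching {U V : Type*} (E : Finset (U × V)) (w : U × V → ℝ)
    (M : Finset (U × V)) : Prop :=
  IsMatching E M ∧ ∀ M' : Finset (U × V), IsMatching E M' → mWeight w M' ≤ mWeight w M

/-- All matchings of the graph with edge set `E` have pairwise distinct weights. -/
def DistinctWeights {U V : Type*} (E : Finset (U × V)) (w : U × V → ℝ) : Prop :=
  ∀ M₁ M₂ : Finset (U × V), IsMatching E M₁ → IsMatching E M₂ → M₁ ≠ M₂ →
    mWeight w M₁ ≠ mWeight w M₂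

/-!
Suppose `u ∈ U₂` is left unmatched by `M₂`. Let `R` be the set of left vertices reachable from `u`
by alternating steps `x —M₁— v —M₂— y`. Exchanging `M₁` and `M₂` on the edges whose left endpoint
lies in `R` turns them into matchings `M₁'` of `G[U₁ ∪ V]` and `M₂'` of `G[U₂ ∪ V]` with
`w(M₁') + w(M₂') = w(M₁) + w(M₂)`. By maximality both exchanges preserve the weights, yet
`M₂' ≠ M₂` because it contains the `M₁`-edge at `u`, contradicting distinctness of weights.
The exchanges are matchings because `R` is closed under alternating steps forwards and, since `u`
is `M₂`-free, backwards as well.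
-/

section

variable {U V : Type*}

lemma IsMatching.mono {E E' M : Finset (U × V)} (hE : E ⊆ E') (h : IsMatching E M) :
    IsMatching E' M :=
  ⟨h.1.trans hE, h.2⟩

lemma restrictL_subset (E : Finset (U × V)) (U' : Finset U) : restrictL E U' ⊆ E :=
  Finset.filter_subset _ _

lemma restrictL_mono (E : Finset (U × V)) {U₁ U₂ : Finset U} (h : U₂ ⊆ U₁) :
    restrictL E U₂ ⊆ restrictL E U₁ :=
  Finset.monotone_filter_right E fun _ _ he => h he

lemma fst_mem_of_mem_restrictL {E M : Finset (U × V)} {U' : Finset U}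
    (hM : M ⊆ restrictL E U') {e : U × V} (he : e ∈ M) : e.1 ∈ U' :=
  (Finset.mem_filter.mp (hM he)).2

lemma IsMatching.card_image_fst {E M : Finset (U × V)} (h : IsMatching E M) :
    (M.image Prod.fst).card = M.card :=
  Finset.card_image_of_injOn fun e₁ h₁ e₂ h₂ he => h.2 e₁ h₁ e₂ h₂ (Or.inl he)

lemma IsMatching.card_image_snd {E M : Finset (U × V)} (h : IsMatching E M) :
    (M.image Prod.snd).card = M.card :=
  Finset.card_image_of_injOn fun e₁ h₁ e₂ h₂ he => h.2 e₁ h₁ e₂ h₂ (Or.inr he)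

lemma IsMatching.card_image_snd_eq_iff_subset_image_fst {E M : Finset (U × V)} {U' : Finset U}
    (h : IsMatching (restrictL E U') M) :
    (M.image Prod.snd).card = U'.card ↔ U' ⊆ M.image Prod.fst := by
  have hfst : M.image Prod.fst ⊆ U' :=
    Finset.image_subset_iff.mpr fun _ he => fst_mem_of_mem_restrictL h.1 he
  rw [h.card_image_snd, ← h.card_image_fst]
  exact ⟨fun hcard => (Finset.eq_of_subset_of_card_le hfst hcard.ge).superset,
    fun hsat => congrArg Finset.card (hfst.antisymm hsat)⟩

noncomputable def splice (M N : Finset (U × V)) (R : Set U) : Finset (U × V) :=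
  M.filter (·.1 ∉ R) ∪ N.filter (·.1 ∈ R)

lemma mWeight_splice (w : U × V → ℝ) (M N : Finset (U × V)) (R : Set U) :
    mWeight w (splice M N R) = mWeight w (M.filter (·.1 ∉ R)) + mWeight w (N.filter (·.1 ∈ R)) :=
  Finset.sum_union <| Finset.disjoint_left.mpr fun _ h₁ h₂ =>
    (Finset.mem_filter.mp h₁).2 (Finset.mem_filter.mp h₂).2

lemma mWeight_splice_add_mWeight_splice (w : U × V → ℝ) (M N : Finset (U × V)) (R : Set U) :
    mWeight w (splice M N R) + mWeight w (splice N M R) = mWeight w M + mWeight w N := by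
  rw [mWeight_splice, mWeight_splice]
  simp only [mWeight]
  rw [← Finset.sum_filter_add_sum_filter_not M (·.1 ∈ R),
    ← Finset.sum_filter_add_sum_filter_not N (·.1 ∈ R)]
  ring

lemma IsMatching.splice {E E' M N : Finset (U × V)} {R : Set U}
    (hM : IsMatching E M) (hN : IsMatching E' N) (hNE : ∀ e ∈ N, e.1 ∈ R → e ∈ E)
    (hR : ∀ x y v, x ∈ R → (x, v) ∈ N → (y, v) ∈ M → y ∈ R) :
    IsMatching E (splice M N R) := by
  have hcross : ∀ e₁ ∈ M.filter (·.1 ∉ R), ∀ e₂ ∈ N.filter (·.1 ∈ R),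
      ¬(e₁.1 = e₂.1 ∨ e₁.2 = e₂.2) := by
    rintro ⟨y, v⟩ he₁ ⟨x, v'⟩ he₂ (hl | hr)
    all_goals simp only [Finset.mem_filter] at he₁ he₂
    · obtain rfl : y = x := hl
      exact he₁.2 he₂.2
    · obtain rfl : v = v' := hr
      exact he₁.2 (hR x y v he₂.2 he₂.1 he₁.1)
  refine ⟨Finset.union_subset ((Finset.filter_subset _ _).trans hM.1) fun e he => ?_, ?_⟩
  · exact hNE e (Finset.mem_filter.mp he).1 (Finset.mem_filter.mp he).2
  · intro e₁ he₁ e₂ he₂ hshare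
    rcases Finset.mem_union.mp he₁ with h₁ | h₁ <;> rcases Finset.mem_union.mp he₂ with h₂ | h₂
    · exact hM.2 _ (Finset.mem_filter.mp h₁).1 _ (Finset.mem_filter.mp h₂).1 hshare
    · exact absurd hshare (hcross _ h₁ _ h₂)
    · exact absurd (hshare.imp Eq.symm Eq.symm) (hcross _ h₂ _ h₁)
    · exact hN.2 _ (Finset.mem_filter.mp h₁).1 _ (Finset.mem_filter.mp h₂).1 hshare

def AltStep (M N : Finset (U × V)) (x y : U) : Prop :=
  ∃ v, (x, v) ∈ M ∧ (y, v) ∈ N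

lemma eq_or_exists_mem_of_reflTransGen_altStep {M N : Finset (U × V)} {u x : U}
    (h : Relation.ReflTransGen (AltStep M N) u x) : x = u ∨ ∃ v, (x, v) ∈ N := by
  rcases h.cases_tail with rfl | ⟨_, _, _, _, hN⟩
  exacts [Or.inl rfl, Or.inr ⟨_, hN⟩]

lemma reflTransGen_altStep_of_mem {E E' M N : Finset (U × V)} (hM : IsMatching E M)
    (hN : IsMatching E' N) {u x y : U} {v : V} (hu : ∀ v, (u, v) ∉ N)
    (hy : Relation.ReflTransGen (AltStep M N) u y) (hyv : (y, v) ∈ N) (hxv : (x, v) ∈ M) :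
    Relation.ReflTransGen (AltStep M N) u x := by
  rcases hy.cases_tail with rfl | ⟨z, hz, v', hzv', hyv'⟩
  · exact absurd hyv (hu v)
  · have hv : v' = v := congrArg Prod.snd (hN.2 _ hyv' _ hyv (Or.inl rfl))
    subst hv
    obtain rfl : z = x := congrArg Prod.fst (hM.2 _ hzv' _ hxv (Or.inr rfl))
    exact hz

end

lemma IsMaxMatching.mem_image_fst_of_restrictL_subset {U V : Type*} {E : Finset (U × V)}
    {w : U × V → ℝ} (hdist : DistinctWeights E w) {U₁ U₂ : Finset U} (hsub : U₂ ⊆ U₁)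
    {M₁ M₂ : Finset (U × V)} (h₁ : IsMaxMatching (restrictL E U₁) w M₁)
    (h₂ : IsMaxMatching (restrictL E U₂) w M₂) {u : U} (hu₂ : u ∈ U₂)
    (hu₁ : u ∈ M₁.image Prod.fst) : u ∈ M₂.image Prod.fst := by
  by_contra hu
  have hfree : ∀ v, (u, v) ∉ M₂ := fun v huv => hu (Finset.mem_image.mpr ⟨_, huv, rfl⟩)
  set R : Set U := {x | Relation.ReflTransGen (AltStep M₁ M₂) u x}
  have hRU₂ : ∀ x ∈ R, x ∈ U₂ := fun x hx => by
    rcases eq_or_exists_mem_of_reflTransGen_altStep hx with rfl | ⟨v, hxv⟩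
    exacts [hu₂, fst_mem_of_mem_restrictL h₂.1.1 hxv]
  have hM₂' : IsMatching (restrictL E U₂) (splice M₂ M₁ R) := by
    refine h₂.1.splice h₁.1 (fun e he heR => ?_) fun x y v hx hxv hyv => hx.tail ⟨v, hxv, hyv⟩
    exact Finset.mem_filter.mpr ⟨restrictL_subset E U₁ (h₁.1.1 he), hRU₂ _ heR⟩
  have hM₁' : IsMatching (restrictL E U₁) (splice M₁ M₂ R) :=
    h₁.1.splice h₂.1 (fun e he _ => restrictL_mono E hsub (h₂.1.1 he))
      fun y x v hy hyv hxv => reflTransGen_altStep_of_mem h₁.1 h₂.1 hfree hy hyv hxv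
  have hne : splice M₂ M₁ R ≠ M₂ := fun heq => by
    obtain ⟨⟨_, v⟩, huv, rfl⟩ := Finset.mem_image.mp hu₁
    exact hfree v (heq ▸ Finset.mem_union_right _ (Finset.mem_filter.mpr ⟨huv, .refl⟩))
  have hsum := mWeight_splice_add_mWeight_splice w M₂ M₁ R
  have hle₁ := h₁.2 _ hM₁'
  have hle₂ := h₂.2 _ hM₂'
  exact hdist _ _ (hM₂'.mono (restrictL_subset E U₂)) (h₂.1.mono (restrictL_subset E U₂)) hne
    (by linarith)

theorem mm_F_card_general {U V : Type*}
    (E : Finset (U × V)) (w : U × V → ℝ)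
    (hdist : DistinctWeights E w)
    (U₁ U₂ : Finset U) (hsub : U₂ ⊆ U₁)
    (M₁ M₂ : Finset (U × V))
    (h₁ : IsMaxMatching (restrictL E U₁) w M₁)
    (h₂ : IsMaxMatching (restrictL E U₂) w M₂)
    (hfull : (M₁.image Prod.snd).card = U₁.card) :
    (M₂.image Prod.snd).card = U₂.card := by
  rw [h₁.1.card_image_snd_eq_iff_subset_image_fst] at hfull
  rw [h₂.1.card_image_snd_eq_iff_subset_image_fst]
  exact fun u hu => h₁.mem_image_fst_of_restrictL_subset hdist hsub h₂ hu (hfull (hsub hu))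

/-- If `U₂ ⊆ U₁ ⊆ U` and `|F(U₁)| = |U₁|` (every vertex of `U₁` is matched in
the unique maximum-weight matching of `G[U₁ ∪ V]`), then `|F(U₂)| = |U₂|`. -/
theorem mm_F_card {U V : Type*} [Fintype U] [Fintype V]
    (E : Finset (U × V)) (w : U × V → ℝ)
    (hdist : DistinctWeights E w)
    (U₁ U₂ : Finset U) (hsub : U₂ ⊆ U₁)
    (M₁ M₂ : Finset (U × V))
    (h₁ : IsMaxMatching (restrictL E U₁) w M₁)
    (h₂ : IsMaxMatching (restrictL E U₂) w M₂)
    (hfull : (M₁.image Prod.snd).card = U₁.card) :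
    (M₂.image Prod.snd).card = U₂.card :=
  mm_F_card_general E w hdist U₁ U₂ hsub M₁ M₂ h₁ h₂ hfull
end

section
/- Every antimatroid admits a representation by stable matchings: for every antimatroid (S, 𝓕) on a finite set S there exists a stable matching instance (G = (U,V;E), ≻) with V = S such that the codomain of the induced map F : 2^U → 2^V coincides with 𝓕, i.e., { F(U') : U' ⊆ U } = 𝓕. -/
open scoped Classical

/-- `(u, v)` is a blocking pair against the matching `M`, with respect to the
edge set `E` and the preference profiles `succU` (for left vertices) and
`succV` (for right vertices):  `(u,v)` is an edge, `u` is unmatched or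
prefers `v` to its partner, and `v` is unmatched or prefers `u` to its partner. -/
def IsBlocking {U V : Type*} (E : Finset (U × V)) (succU : U → V → V → Prop)
    (succV : V → U → U → Prop) (M : Finset (U × V)) (u : U) (v : V) : Prop :=
  (u, v) ∈ E ∧
  ((∀ v', (u, v') ∉ M) ∨ (∃ v', (u, v') ∈ M ∧ succU u v v')) ∧
  ((∀ u', (u', v) ∉ M) ∨ (∃ u', (u', v) ∈ M ∧ succV v u u'))

/-- `M` is a stable matching of the instance with edge set `E` and
preferences `succU`, `succV`. -/
def IsStable {U V : Type*} (E : Finset (U × V)) (succU : U → V → V → Prop)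
    (succV : V → U → U → Prop) (M : Finset (U × V)) : Prop :=
  IsMatching E M ∧ ∀ u v, ¬ IsBlocking E succU succV M u v

/-- The preferences form a stable matching instance on the bipartite graph with
edge set `E`: each `succU u` is a strict linear order on the neighbors of `u`,
and each `succV v` is a strict linear order on the neighbors of `v`. -/
def ValidPrefs {U V : Type*} (E : Finset (U × V)) (succU : U → V → V → Prop)
    (succV : V → U → U → Prop) : Prop :=
  (∀ u v, ¬ succU u v v) ∧
  (∀ u v₁ v₂ v₃, succU u v₁ v₂ → succU u v₂ v₃ → succU u v₁ v₃) ∧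
  (∀ u v₁ v₂, (u, v₁) ∈ E → (u, v₂) ∈ E → v₁ ≠ v₂ → succU u v₁ v₂ ∨ succU u v₂ v₁) ∧
  (∀ v u, ¬ succV v u u) ∧
  (∀ v u₁ u₂ u₃, succV v u₁ u₂ → succV v u₂ u₃ → succV v u₁ u₃) ∧
  (∀ v u₁ u₂, (u₁, v) ∈ E → (u₂, v) ∈ E → u₁ ≠ u₂ → succV v u₁ u₂ ∨ succV v u₂ u₁)

/-- The codomain `{ F(U') : U' ⊆ U }` of the map `F` induced by the stable
matching instance: the family of all sets of right vertices matched by a stable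
matching of a restricted instance `(G, ≻)_{U' ∪ V}`.  (By the rural hospitals
theorem all stable matchings of a given restriction match the same set of
right vertices, so this is exactly the codomain of `F`.) -/
def stableFamily {U V : Type*} (E : Finset (U × V)) (succU : U → V → V → Prop)
    (succV : V → U → U → Prop) : Set (Finset V) :=
  {X | ∃ (U' : Finset U) (M : Finset (U × V)),
    IsStable (restrictL E U') succU succV M ∧ X = M.image Prod.snd}


/-!
The left vertices are the feasible words of `𝓕`: repetition-free words all of whose prefixes
lie in `𝓕`. A word is adjacent to its letters and prefers earlier ones; every element prefers
shorter words. In a stable matching, the prefix of a matched word up to its partner is entirely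
matched (an unmatched letter in it would block), so the matched set is a union of members of `𝓕`.
Conversely, by accessibility every `Y ∈ 𝓕` is spelled by a feasible word `w`, and matching the
prefix of `w` of length `i + 1` to the letter `w[i]` is stable: a letter preferred by such a
prefix is already matched to a shorter one.
-/

section Matching

variable {U V : Type*} {E M : Finset (U × V)} {succU : U → V → V → Prop}
  {succV : V → U → U → Prop} {u u' : U} {v x : V}

theorem mem_restrictL {U' : Finset U} {e : U × V} : e ∈ restrictL E U' ↔ e ∈ E ∧ e.1 ∈ U' := by
  simp [restrictL]

theorem IsMatching.prefers_left_of_isBlocking (hM : IsMatching E M) (huv : (u, v) ∈ M)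
    (h : IsBlocking E succU succV M u x) : succU u x v := by
  obtain ⟨-, hu | ⟨v', hv', hx⟩, -⟩ := h
  · exact absurd huv (hu v)
  · obtain rfl : v' = v := congrArg Prod.snd (hM.2 _ hv' _ huv (Or.inl rfl))
    exact hx

theorem IsMatching.prefers_right_of_isBlocking (hM : IsMatching E M) (huv : (u, v) ∈ M)
    (h : IsBlocking E succU succV M u' v) : succV v u' u := by
  obtain ⟨-, -, hv | ⟨u'', hu'', hu'⟩⟩ := h
  · exact absurd huv (hv u)
  · obtain rfl : u'' = u := congrArg Prod.fst (hM.2 _ hu'' _ huv (Or.inr rfl))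
    exact hu'

end Matching

section FeasibleWord

variable {S : Type*} {𝓕 : Set (Finset S)}

def IsFeasibleWord (𝓕 : Set (Finset S)) (w : List S) : Prop :=
  w.Nodup ∧ ∀ n, (w.take n).toFinset ∈ 𝓕

theorem IsFeasibleWord.take {w : List S} (hw : IsFeasibleWord 𝓕 w) (n : ℕ) :
    IsFeasibleWord 𝓕 (w.take n) :=
  ⟨hw.1.sublist (List.take_sublist n w), fun _ => List.take_take ▸ hw.2 _⟩

instance [Fintype S] : Finite {w : List S // IsFeasibleWord 𝓕 w} :=
  Finite.of_injective (fun w => (⟨w.1, w.2.1⟩ : {l : List S // l.Nodup}))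
    fun _ _ h => Subtype.ext (congrArg Subtype.val h :)

theorem exists_isFeasibleWord_toFinset_eq (hempty : ∅ ∈ 𝓕)
    (hacc : ∀ X ∈ 𝓕, X ≠ ∅ → ∃ v ∈ X, X.erase v ∈ 𝓕) {Y : Finset S} (hY : Y ∈ 𝓕) :
    ∃ w, IsFeasibleWord 𝓕 w ∧ w.toFinset = Y := by
  induction Y using Finset.strongInduction with
  | H Y ih =>
    by_cases hY0 : Y = ∅
    · exact ⟨[], ⟨List.nodup_nil, fun n => by simpa [hY0] using hempty⟩, by simp [hY0]⟩
    obtain ⟨v, hv, hYv⟩ := hacc Y hY hY0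
    obtain ⟨w, hw, hwY⟩ := ih _ (Finset.erase_ssubset hv) hYv
    have hvw : v ∉ w := fun h => by simpa [hwY] using List.mem_toFinset.2 h
    have hwvY : (w ++ [v]).toFinset = Y := by
      rw [List.toFinset_append, hwY]
      simp [Finset.insert_erase hv]
    refine ⟨w ++ [v], ⟨hw.1.append (List.nodup_singleton v) (by simpa using hvw), fun n => ?_⟩,
      hwvY⟩
    rcases le_or_gt n w.length with hn | hn
    · rw [List.take_append_of_le_length hn]
      exact hw.2 n
    · rw [List.take_of_length_le (by simpa using hn), hwvY]
      exact hY

end FeasibleWord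

section WordInstance

variable {S U : Type*}

noncomputable def wordEdges [Fintype S] [Fintype U] (word : U → List S) : Finset (U × S) :=
  Finset.univ.filter fun p => p.2 ∈ word p.1

def prefersEarlier (word : U → List S) (u : U) (x y : S) : Prop :=
  (word u).idxOf x < (word u).idxOf y

def prefersShorter [LinearOrder U] (word : U → List S) (_ : S) (u₁ u₂ : U) : Prop :=
  toLex ((word u₁).length, u₁) < toLex ((word u₂).length, u₂)

/-- Matches every letter `x` of `w` to the left vertex `pre (w.idxOf x)`, which is meant to carry
the prefix of `w` ending at `x`. -/
noncomputable def prefixMatching (w : List S) (pre : ℕ → U) : Finset (U × S) :=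
  w.toFinset.image fun x => (pre (w.idxOf x), x)

theorem mem_wordEdges [Fintype S] [Fintype U] {word : U → List S} {u : U} {x : S} :
    (u, x) ∈ wordEdges word ↔ x ∈ word u := by
  simp [wordEdges]

theorem mem_prefixMatching {w : List S} {pre : ℕ → U} {u : U} {x : S} :
    (u, x) ∈ prefixMatching w pre ↔ x ∈ w ∧ u = pre (w.idxOf x) := by
  simp [prefixMatching, eq_comm]

theorem length_word_idxOf_eq {word : U → List S} {w : List S} {pre : ℕ → U}
    (hpre : ∀ i < w.length, word (pre i) = w.take (i + 1)) {x : S} (hx : x ∈ w) :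
    (word (pre (w.idxOf x))).length = w.idxOf x + 1 := by
  have hlt := List.idxOf_lt_length_of_mem hx
  rw [hpre _ hlt, List.length_take]
  omega

variable [Fintype S] [Fintype U] [LinearOrder U] (word : U → List S)

theorem validPrefs_word :
    ValidPrefs (wordEdges word) (prefersEarlier word) (prefersShorter word) := by
  refine ⟨fun _ _ => lt_irrefl _, fun _ _ _ _ => lt_trans, fun u x y hx _ hxy => ?_,
    fun _ _ => lt_irrefl _, fun _ _ _ _ => lt_trans, fun _ u₁ u₂ _ _ hu => ?_⟩
  · rw [mem_wordEdges] at hx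
    exact lt_or_gt_of_ne fun h => hxy ((List.idxOf_inj hx).1 h)
  · exact lt_or_gt_of_ne fun h => hu (congrArg Prod.snd (toLex.injective h))

variable {word} {U' : Finset U} {M : Finset (U × S)}

-- An unmatched `y` would block together with `u`.
theorem IsStable.mem_image_snd_of_mem_take
    (hM : IsStable (restrictL (wordEdges word) U') (prefersEarlier word) (prefersShorter word) M)
    {u : U} {x y : S} (hux : (u, x) ∈ M) (hy : y ∈ (word u).take ((word u).idxOf x + 1)) :
    y ∈ M.image Prod.snd := by
  by_contra hyM
  obtain ⟨-, hu⟩ := mem_restrictL.1 (hM.1.1 hux)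
  have hyu : y ∈ word u := List.mem_of_mem_take hy
  have hyx : (word u).idxOf y ≠ (word u).idxOf x := fun h =>
    hyM (((List.idxOf_inj hyu).1 h) ▸ Finset.mem_image_of_mem Prod.snd hux)
  have hle := (List.mem_take_iff_idxOf_lt hyu).1 hy
  refine hM.2 u y ⟨mem_restrictL.2 ⟨mem_wordEdges.2 hyu, hu⟩,
    Or.inr ⟨x, hux, by unfold prefersEarlier; omega⟩, Or.inl fun u' h => ?_⟩
  exact hyM (Finset.mem_image_of_mem Prod.snd h)

theorem IsStable.image_snd_mem {𝓕 : Set (Finset S)}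
    (hword : ∀ u n, ((word u).take n).toFinset ∈ 𝓕)
    (hempty : ∅ ∈ 𝓕) (hunion : ∀ X ∈ 𝓕, ∀ Y ∈ 𝓕, X ∪ Y ∈ 𝓕)
    (hM : IsStable (restrictL (wordEdges word) U') (prefersEarlier word) (prefersShorter word) M) :
    M.image Prod.snd ∈ 𝓕 := by
  set prefixUpTo : U × S → Finset S :=
    fun e => ((word e.1).take ((word e.1).idxOf e.2 + 1)).toFinset
  have hsup : M.image Prod.snd = M.sup prefixUpTo := by
    refine le_antisymm (fun x hx => ?_) (Finset.sup_le fun e he y hy => ?_)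
    · obtain ⟨⟨u, x⟩, hux, rfl⟩ := Finset.mem_image.1 hx
      have hxu : x ∈ word u := mem_wordEdges.1 (mem_restrictL.1 (hM.1.1 hux)).1
      refine Finset.mem_sup.2 ⟨(u, x), hux, List.mem_toFinset.2 ?_⟩
      exact (List.mem_take_iff_idxOf_lt hxu).2 (Nat.lt_succ_self _)
    · exact hM.mem_image_snd_of_mem_take he (List.mem_toFinset.1 hy)
  rw [hsup]
  exact Finset.sup_mem 𝓕 hempty hunion M prefixUpTo fun e _ => hword _ _

variable {w : List S} {pre : ℕ → U} (hpre : ∀ i < w.length, word (pre i) = w.take (i + 1))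
include hpre

theorem isMatching_prefixMatching :
    IsMatching (restrictL (wordEdges word) ((prefixMatching w pre).image Prod.fst))
      (prefixMatching w pre) := by
  refine ⟨?_, ?_⟩
  · rintro ⟨u, x⟩ hux
    obtain ⟨hx, rfl⟩ := mem_prefixMatching.1 hux
    refine mem_restrictL.2 ⟨mem_wordEdges.2 ?_, Finset.mem_image_of_mem Prod.fst hux⟩
    rw [hpre _ (List.idxOf_lt_length_of_mem hx)]
    exact (List.mem_take_iff_idxOf_lt hx).2 (Nat.lt_succ_self _)
  · rintro ⟨u, x⟩ hux ⟨u', y⟩ huy hxy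
    obtain ⟨hx, rfl⟩ := mem_prefixMatching.1 hux
    obtain ⟨hy, rfl⟩ := mem_prefixMatching.1 huy
    obtain hxy | rfl := hxy
    · have hidx : w.idxOf x = w.idxOf y := by
        simpa [length_word_idxOf_eq hpre hx, length_word_idxOf_eq hpre hy] using
          congrArg (fun u => (word u).length) hxy
      rw [(List.idxOf_inj hx).1 hidx]
    · rfl

/-- A blocking pair `(u, y)` would have `y` strictly before the partner of `u` in the prefix
carried by `u`, while `y` is matched to a shorter prefix, which it prefers. -/
theorem isStable_prefixMatching :
    IsStable (restrictL (wordEdges word) ((prefixMatching w pre).image Prod.fst))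
      (prefersEarlier word) (prefersShorter word) (prefixMatching w pre) := by
  have hM := isMatching_prefixMatching hpre
  refine ⟨hM, fun u y hb => ?_⟩
  obtain ⟨hyu, hu⟩ := mem_restrictL.1 hb.1
  obtain ⟨⟨u, x⟩, hux, rfl⟩ := Finset.mem_image.1 hu
  obtain ⟨hx, rfl⟩ := mem_prefixMatching.1 hux
  have hpx := hpre _ (List.idxOf_lt_length_of_mem hx)
  rw [mem_wordEdges, hpx] at hyu
  have hy := List.mem_of_mem_take hyu
  have hearlier := hM.prefers_left_of_isBlocking hux hb
  have hshorter := hM.prefers_right_of_isBlocking (mem_prefixMatching.2 ⟨hy, rfl⟩) hb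
  have hxx : x ∈ w.take (w.idxOf x + 1) := (List.mem_take_iff_idxOf_lt hx).2 (Nat.lt_succ_self _)
  rw [prefersEarlier, hpx, (List.take_prefix _ w).idxOf_eq_of_mem hyu,
    (List.take_prefix _ w).idxOf_eq_of_mem hxx] at hearlier
  rw [prefersShorter, Prod.Lex.toLex_lt_toLex, length_word_idxOf_eq hpre hx,
    length_word_idxOf_eq hpre hy] at hshorter
  omega

theorem toFinset_mem_stableFamily :
    w.toFinset ∈ stableFamily (wordEdges word) (prefersEarlier word) (prefersShorter word) :=
  ⟨_, _, isStable_prefixMatching hpre,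
    by simp [prefixMatching, Finset.image_image, Function.comp_def]⟩

end WordInstance

/-- Every antimatroid `(S, 𝓕)` admits a representation by stable matchings:
there is a stable matching instance with right vertex set `S` whose induced
map `F` has codomain exactly `𝓕`. -/
theorem antimatroid_stable_representation {S : Type*} [Fintype S]
    (𝓕 : Set (Finset S))
    (hempty : ∅ ∈ 𝓕)
    (hacc : ∀ X ∈ 𝓕, X ≠ ∅ → ∃ v ∈ X, X.erase v ∈ 𝓕)
    (hunion : ∀ X ∈ 𝓕, ∀ Y ∈ 𝓕, X ∪ Y ∈ 𝓕) :
    ∃ (U : Type) (_ : Fintype U) (E : Finset (U × S))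
      (succU : U → S → S → Prop) (succV : S → U → U → Prop),
      ValidPrefs E succU succV ∧
      stableFamily E succU succV = 𝓕 := by
  let e := Finite.equivFin {w : List S // IsFeasibleWord 𝓕 w}
  let word : Fin _ → List S := fun u => (e.symm u).1
  refine ⟨_, inferInstance, wordEdges word, prefersEarlier word, prefersShorter word,
    validPrefs_word word, Set.Subset.antisymm ?_ fun Y hY => ?_⟩
  · rintro _ ⟨U', M, hM, rfl⟩
    exact hM.image_snd_mem (fun u => (e.symm u).2.2) hempty hunion
  · obtain ⟨w, hw, rfl⟩ := exists_isFeasibleWord_toFinset_eq hempty hacc hY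
    exact toFinset_mem_stableFamily (pre := fun i => e ⟨w.take (i + 1), hw.take _⟩)
      fun i _ => by simp [word]
end
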